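/- arXiv:1308.6129 — 2 statements merged into one kernel-verified Lean document; each statement's English description precedes it below -/
import Mathlib

section
/- Let (X, d) be a metric space, μ a probability measure, and {P_t} a family of Markov operators on bounded measurable functions satisfying the Wang Harnack inequality: for all bounded measurable f ≥ 0, p > 1, t > 0 and x, y ∈ X, (P_t f(x))^p ≤ P_t(f^p)(y) · exp(p K d(x,y)²/(2(p-1)(1 − e^{-2Kt}))) for some K ≥ 0. Suppose also ∫ P_t f dμ = ∫ f dμ for all t and bounded f, and μ(B(o,1)) > 0 for some o ∈ X. Then for every p > 2, every f ≥ 0 with ∫ f^p dμ = 1, every t > 0 and x ∈ X, P_t f(x) ≤ μ(B(o,1))^{-1/p} · exp(K(d(o,x)+1)²/(2(p-1)(1 − e^{-2Kt}))). -/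
open Real MeasureTheory

/-! For `y ∈ B(o, 1)` we have `d(x, y) ≤ d(o, x) + 1`, so the Harnack inequality gives
`(P_t f x)^p ≤ P_t (f^p) y · exp (p K (d(o, x) + 1)² / D)` uniformly on the ball. Integrating in `y`
over the ball (a Markov-type bound, which needs `P_t (f^p) ≥ 0`) and using
`∫ P_t (f^p) dμ = ∫ f^p dμ = 1` gives `(P_t f x)^p μ(B(o, 1)) ≤ exp (p K (d(o, x) + 1)² / D)`;
take `p`-th roots. Here `D = 2 (p - 1) (1 - e^{-2Kt})`. -/

lemma exists_abs_rpow_le {X : Type*} {f : X → ℝ} (hbdd : ∃ M : ℝ, ∀ z, |f z| ≤ M)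
    (hf0 : ∀ z, 0 ≤ f z) {q : ℝ} (hq : 0 ≤ q) : ∃ M : ℝ, ∀ z, |f z ^ q| ≤ M := by
  obtain ⟨M, hM⟩ := hbdd
  refine ⟨M ^ q, fun z => ?_⟩
  rw [abs_of_nonneg (rpow_nonneg (hf0 z) q)]
  exact rpow_le_rpow (hf0 z) ((le_abs_self _).trans (hM z)) hq

lemma mul_measureReal_le_integral_of_le_on {X : Type*} [MeasurableSpace X] {μ : Measure X}
    [IsFiniteMeasure μ] {g : X → ℝ} (hg0 : ∀ z, 0 ≤ g z) (hg : Integrable g μ)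
    {c : ℝ} {s : Set X} (hs : ∀ y ∈ s, c ≤ g y) :
    c * μ.real s ≤ ∫ z, g z ∂μ := by
  rcases le_or_gt c 0 with hc | hc
  · exact (mul_nonpos_of_nonpos_of_nonneg hc measureReal_nonneg).trans (integral_nonneg hg0)
  calc c * μ.real s ≤ c * μ.real {z | c ≤ g z} :=
        mul_le_mul_of_nonneg_left (measureReal_mono hs) hc.le
    _ ≤ ∫ z, g z ∂μ := mul_meas_ge_le_integral_of_nonneg (.of_forall hg0) hg c

lemma le_rpow_neg_inv_mul_exp_of_rpow_mul_le {a m p c : ℝ} (hm : 0 < m) (hp : 0 < p)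
    (h : a ^ p * m ≤ exp (p * c)) : a ≤ m ^ (-(1 / p)) * exp c := by
  rcases le_or_gt a 0 with ha | ha
  · exact ha.trans (by positivity)
  rw [← rpow_le_rpow_iff ha.le (by positivity) hp, mul_rpow (by positivity) (by positivity),
    ← rpow_mul hm.le, ← exp_mul, mul_comm c p, neg_mul, one_div_mul_cancel hp.ne', rpow_neg_one,
    ← div_eq_inv_mul, le_div_iff₀ hm]
  exact h

def WangHarnackIneq {X : Type*} [MetricSpace X] [MeasurableSpace X]
    (P : ℝ → (X → ℝ) → (X → ℝ)) (K : ℝ) : Prop :=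
  ∀ f : X → ℝ, Measurable f → (∃ M : ℝ, ∀ z, |f z| ≤ M) →
    (∀ z, 0 ≤ f z) → ∀ p : ℝ, 1 < p → ∀ t : ℝ, 0 < t → ∀ x y : X,
      P t f x ^ p ≤ P t (fun z => f z ^ p) y *
        exp (p * K * dist x y ^ 2 / (2 * (p - 1) * (1 - exp (-2 * K * t))))

namespace WangHarnackIneq

variable {X : Type*} [MetricSpace X] [MeasurableSpace X] {P : ℝ → (X → ℝ) → (X → ℝ)} {K : ℝ}
  {f : X → ℝ}

-- Harnack with exponent 2 for `f ^ (q / 2)` bounds `P t (f ^ q) y` below by a square.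
lemma nonneg_rpow (hP : WangHarnackIneq P K) (hf : Measurable f)
    (hbdd : ∃ M : ℝ, ∀ z, |f z| ≤ M) (hf0 : ∀ z, 0 ≤ f z) {q : ℝ} (hq : 0 < q) {t : ℝ}
    (ht : 0 < t) (y : X) : 0 ≤ P t (fun z => f z ^ q) y := by
  have hsq : (fun z => (f z ^ (q / 2)) ^ (2 : ℝ)) = fun z => f z ^ q := by
    funext z
    rw [← rpow_mul (hf0 z), div_mul_cancel₀ q two_ne_zero]
  have h := hP (fun z => f z ^ (q / 2)) ((continuous_rpow_const (by positivity)).measurable.comp hf)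
    (exists_abs_rpow_le hbdd hf0 (by positivity)) (fun z => rpow_nonneg (hf0 z) _)
    2 one_lt_two t ht y y
  rw [hsq, rpow_two] at h
  exact nonneg_of_mul_nonneg_left ((sq_nonneg _).trans h) (exp_pos _)

lemma rpow_le_mul_exp_of_dist_le (hP : WangHarnackIneq P K) (hK : 0 ≤ K) (hf : Measurable f)
    (hbdd : ∃ M : ℝ, ∀ z, |f z| ≤ M) (hf0 : ∀ z, 0 ≤ f z) {p : ℝ} (hp : 1 < p) {t : ℝ}
    (ht : 0 < t) {x y : X} {r : ℝ} (hxy : dist x y ≤ r) :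
    (P t f x) ^ p ≤ P t (fun z => f z ^ p) y *
      exp (p * K * r ^ 2 / (2 * (p - 1) * (1 - exp (-2 * K * t)))) := by
  refine (hP f hf hbdd hf0 p hp t ht x y).trans ?_
  have hdecay : exp (-2 * K * t) ≤ 1 := exp_le_one_iff.mpr (by nlinarith)
  have hp0 : 0 ≤ p - 1 := by linarith
  gcongr
  exact hP.nonneg_rpow hf hbdd hf0 (by linarith) ht y

end WangHarnackIneq

theorem stmt_7_general {X : Type*} [MetricSpace X] [MeasurableSpace X]
    (μ : Measure X) [IsProbabilityMeasure μ]
    (P : ℝ → (X → ℝ) → (X → ℝ)) (K : ℝ) (hK : 0 ≤ K)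
    (harnack : ∀ f : X → ℝ, Measurable f → (∃ M : ℝ, ∀ z, |f z| ≤ M) →
      (∀ z, 0 ≤ f z) → ∀ p : ℝ, 1 < p → ∀ t : ℝ, 0 < t → ∀ x y : X,
        (P t f x) ^ p ≤ P t (fun z => (f z) ^ p) y *
          Real.exp (p * K * (dist x y) ^ 2 / (2 * (p - 1) * (1 - Real.exp (-2 * K * t)))))
    (hmass : ∀ t : ℝ, ∀ f : X → ℝ, Measurable f → (∃ M : ℝ, ∀ z, |f z| ≤ M) →
      ∫ z, P t f z ∂μ = ∫ z, f z ∂μ)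
    (o : X) (ho : 0 < μ (Metric.ball o 1)) :
    ∀ p : ℝ, 2 < p → ∀ f : X → ℝ, Measurable f → (∃ M : ℝ, ∀ z, |f z| ≤ M) →
      (∀ z, 0 ≤ f z) → (∫ z, (f z) ^ p ∂μ = 1) → ∀ t : ℝ, 0 < t → ∀ x : X,
        P t f x ≤ (μ (Metric.ball o 1)).toReal ^ (-(1 / p)) *
          Real.exp (K * (dist o x + 1) ^ 2 / (2 * (p - 1) * (1 - Real.exp (-2 * K * t)))) := by
  intro p hp f hf hbdd hf0 hfp t ht x
  have hP : WangHarnackIneq P K := harnack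
  have hp1 : 1 < p := by linarith
  set D := 2 * (p - 1) * (1 - exp (-2 * K * t))
  set g := fun z => f z ^ p
  have hg_nonneg : ∀ y, 0 ≤ P t g y := hP.nonneg_rpow hf hbdd hf0 (by linarith) ht
  have hg_mass : ∫ z, P t g z ∂μ = 1 :=
    (hmass t g ((continuous_rpow_const (by linarith)).measurable.comp hf)
      (exists_abs_rpow_le hbdd hf0 (by linarith))).trans hfp
  have hball : ∀ y ∈ Metric.ball o 1,
      P t f x ^ p / exp (p * (K * (dist o x + 1) ^ 2 / D)) ≤ P t g y := by
    intro y hy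
    have hxy : dist x y ≤ dist o x + 1 := by
      linarith [dist_triangle x o y, dist_comm x o, Metric.mem_ball'.mp hy]
    rw [div_le_iff₀ (exp_pos _), ← mul_div_assoc, ← mul_assoc]
    exact hP.rpow_le_mul_exp_of_dist_le hK hf hbdd hf0 hp1 ht hxy
  -- integrability of `P t g` is not assumed; it follows from its integral being `1 ≠ 0`
  have hmarkov := mul_measureReal_le_integral_of_le_on hg_nonneg
    (.of_integral_ne_zero (hg_mass ▸ one_ne_zero)) hball
  rw [hg_mass, div_mul_eq_mul_div, div_le_one (exp_pos _)] at hmarkov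
  exact le_rpow_neg_inv_mul_exp_of_rpow_mul_le (ENNReal.toReal_pos ho.ne' (measure_ne_top _ _))
    (by linarith) hmarkov

theorem stmt_7 {X : Type*} [MetricSpace X] [MeasurableSpace X] [BorelSpace X]
    (μ : Measure X) [IsProbabilityMeasure μ]
    (P : ℝ → (X → ℝ) → (X → ℝ)) (K : ℝ) (hK : 0 ≤ K)
    (harnack : ∀ f : X → ℝ, Measurable f → (∃ M : ℝ, ∀ z, |f z| ≤ M) →
      (∀ z, 0 ≤ f z) → ∀ p : ℝ, 1 < p → ∀ t : ℝ, 0 < t → ∀ x y : X,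
        (P t f x) ^ p ≤ P t (fun z => (f z) ^ p) y *
          Real.exp (p * K * (dist x y) ^ 2 / (2 * (p - 1) * (1 - Real.exp (-2 * K * t)))))
    (hmass : ∀ t : ℝ, ∀ f : X → ℝ, Measurable f → (∃ M : ℝ, ∀ z, |f z| ≤ M) →
      ∫ z, P t f z ∂μ = ∫ z, f z ∂μ)
    (o : X) (ho : 0 < μ (Metric.ball o 1)) :
    ∀ p : ℝ, 2 < p → ∀ f : X → ℝ, Measurable f → (∃ M : ℝ, ∀ z, |f z| ≤ M) →
      (∀ z, 0 ≤ f z) → (∫ z, (f z) ^ p ∂μ = 1) → ∀ t : ℝ, 0 < t → ∀ x : X,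
        P t f x ≤ (μ (Metric.ball o 1)).toReal ^ (-(1 / p)) *
          Real.exp (K * (dist o x + 1) ^ 2 / (2 * (p - 1) * (1 - Real.exp (-2 * K * t)))) :=
  stmt_7_general μ P K hK harnack hmass o ho
end

section
/- Let (X, d) be a metric space and let G : [0,t] × [0,t] → ℝ be such that for all r, the map s ↦ G(r,s) is Lipschitz on [0,t] with Lipschitz constant L₁ independent of r, and for all s, the map r ↦ G(r,s) is Lipschitz on [0,t] with Lipschitz constant L₂ independent of s. Then the map s ↦ G(s,s) is Lipschitz on [0,t], and for L¹-a.e. s ∈ (0,t), d/ds G(s,s) ≤ limsup_{u↓0} (G(s, s+u) − G(s,s))/u + limsup_{u↓0} (G(s,s) − G(s−u, s))/u. -/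
/-!
The diagonal `g s = G s s` is Lipschitz by the triangle inequality through `G s s'`. For the
derivative, extend `G` to `ℝ × ℝ` by clamping to `[0, t]` and split the increment of `g` as
`g (τ + u) - g τ = u * A u τ + u * B u (τ + u)`, with the forward quotient
`A u τ = (G τ (τ + u) - G τ τ) / u` and the backward quotient `B u σ = (G σ σ - G (σ - u) σ) / u`.
Integrated over `[x, y]`, the shift in the `B`-term costs only `O(u)`, so
`g y - g x ≤ ∫ τ in x..y, (A u τ + B u τ) + O(u)`. Reverse Fatou along `u = 1 / (n + 1)` gives
`g y - g x ≤ ∫ τ in x..y, Φ τ` with `Φ = limsup (A u + B u)`, hence `g' ≤ Φ` a.e. by Lebesgue's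
differentiation theorem, and `Φ ≤ limsup A + limsup B` pointwise.
-/

open Real MeasureTheory Filter Set Topology
open scoped NNReal

lemma abs_limsup_le_of_eventually_abs_le {ι : Type*} {l : Filter ι} [l.NeBot] {u : ι → ℝ} {C : ℝ}
    (hu : ∀ᶠ i in l, |u i| ≤ C) : |limsup u l| ≤ C := by
  have hbdd := isBoundedUnder_le_abs.1 (isBoundedUnder_of_eventually_le hu)
  rw [abs_le]
  constructor
  · exact le_limsup_of_frequently_le (hu.mono fun _ h => (abs_le.1 h).1).frequently hbdd.1
  · exact limsup_le_of_le hbdd.2.isCoboundedUnder_flip (hu.mono fun _ h => (abs_le.1 h).2)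

lemma tendsto_ciSup_tail_limsup {u : ℕ → ℝ} {C : ℝ} (hu : ∀ n, |u n| ≤ C) :
    Tendsto (fun N => ⨆ k, u (k + N)) atTop (𝓝 (limsup u atTop)) := by
  have hbdd : IsBoundedUnder (· ≤ ·) atTop u ∧ IsBoundedUnder (· ≥ ·) atTop u :=
    isBoundedUnder_le_abs.1 (isBoundedUnder_of_eventually_le (Eventually.of_forall hu))
  have htail_bdd (N : ℕ) : BddAbove (range fun k => u (k + N)) :=
    ⟨C, by rintro _ ⟨k, rfl⟩; exact (abs_le.1 (hu _)).2⟩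
  have htail_ge (N : ℕ) : -C ≤ ⨆ k, u (k + N) :=
    (abs_le.1 (hu (0 + N))).1.trans (le_ciSup (htail_bdd N) 0)
  have hanti : Antitone fun N => ⨆ k, u (k + N) := by
    refine antitone_nat_of_succ_le fun N => ciSup_le fun k => ?_
    rw [show k + (N + 1) = (k + 1) + N by omega]
    exact le_ciSup (htail_bdd N) (k + 1)
  have hbelow : BddBelow (range fun N => ⨆ k, u (k + N)) :=
    ⟨-C, by rintro _ ⟨N, rfl⟩; exact htail_ge N⟩
  convert tendsto_atTop_ciInf hanti hbelow using 2
  apply le_antisymm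
  · refine le_ciInf fun N => limsup_le_of_le hbdd.2.isCoboundedUnder_flip ?_
    filter_upwards [eventually_ge_atTop N] with n hn
    obtain ⟨k, rfl⟩ := Nat.exists_eq_add_of_le' hn
    exact le_ciSup (htail_bdd N) k
  · refine le_of_forall_gt_imp_ge_of_dense fun c hc => ?_
    obtain ⟨N, hN⟩ := eventually_atTop.1 (eventually_lt_of_limsup_lt hc hbdd.1)
    exact (ciInf_le hbelow N).trans (ciSup_le fun k => (hN (k + N) (by omega)).le)

theorem limsup_integral_le_integral_limsup {α : Type*} [MeasurableSpace α] {μ : Measure α}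
    [IsFiniteMeasure μ] {f : ℕ → α → ℝ} {C : ℝ} (hf : ∀ n, Measurable (f n))
    (hC : ∀ n x, |f n x| ≤ C) :
    limsup (fun n => ∫ x, f n x ∂μ) atTop ≤ ∫ x, limsup (fun n => f n x) atTop ∂μ := by
  set tail : ℕ → α → ℝ := fun N x => ⨆ k, f (k + N) x
  have hf_le_tail {n N : ℕ} (x : α) (h : N ≤ n) : f n x ≤ tail N x := by
    obtain ⟨k, rfl⟩ := Nat.exists_eq_add_of_le' h
    exact le_ciSup (f := fun k => f (k + N) x)
      ⟨C, by rintro _ ⟨k, rfl⟩; exact (abs_le.1 (hC _ _)).2⟩ k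
  have htail_abs (N : ℕ) (x : α) : |tail N x| ≤ C :=
    abs_le.2 ⟨(abs_le.1 (hC N x)).1.trans (hf_le_tail x le_rfl),
      ciSup_le fun k => (abs_le.1 (hC _ _)).2⟩
  have htail_meas (N : ℕ) : Measurable (tail N) := Measurable.iSup fun k => hf (k + N)
  have hlim : Tendsto (fun N => ∫ x, tail N x ∂μ) atTop
      (𝓝 (∫ x, limsup (fun n => f n x) atTop ∂μ)) :=
    tendsto_integral_of_dominated_convergence (fun _ => C)
      (fun N => (htail_meas N).aestronglyMeasurable) (integrable_const C) (fun N => ae_of_all _ (htail_abs N))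
      (ae_of_all _ fun x => tendsto_ciSup_tail_limsup fun n => hC n x)
  have hint (n : ℕ) : Integrable (f n) μ :=
    .of_bound (hf n).aestronglyMeasurable C (ae_of_all _ (hC n))
  refine ge_of_tendsto' hlim fun N => limsup_le_of_le ?_ ?_
  · refine isCoboundedUnder_le_of_le atTop (x := -(C * μ.real univ)) fun n => ?_
    exact neg_le_of_abs_le (norm_integral_le_of_norm_le_const (f := f n) (ae_of_all _ (hC n)))
  · filter_upwards [eventually_ge_atTop N] with n hn
    exact integral_mono (hint n) (.of_bound (htail_meas N).aestronglyMeasurable C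
      (ae_of_all _ (htail_abs N))) fun x => hf_le_tail x hn

lemma LipschitzOnWith.diag {α β : Type*} [PseudoEMetricSpace α] [PseudoEMetricSpace β]
    {H : α → α → β} {s : Set α} {L₁ L₂ : ℝ≥0} (h1 : ∀ r ∈ s, LipschitzOnWith L₁ (H r) s)
    (h2 : ∀ x ∈ s, LipschitzOnWith L₂ (fun r => H r x) s) :
    LipschitzOnWith (L₁ + L₂) (fun x => H x x) s := fun a ha b hb =>
  calc edist (H a a) (H b b) ≤ edist (H a a) (H a b) + edist (H a b) (H b b) := edist_triangle ..
    _ ≤ L₁ * edist a b + L₂ * edist a b := add_le_add (h1 a ha ha hb) (h2 b hb ha hb)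
    _ = ↑(L₁ + L₂) * edist a b := by rw [ENNReal.coe_add, add_mul]

lemma LipschitzWith.diag {α β : Type*} [PseudoEMetricSpace α] [PseudoEMetricSpace β]
    {H : α → α → β} {L₁ L₂ : ℝ≥0} (h1 : ∀ r, LipschitzWith L₁ (H r))
    (h2 : ∀ x, LipschitzWith L₂ fun r => H r x) : LipschitzWith (L₁ + L₂) fun x => H x x :=
  lipschitzOnWith_univ.1 <|
    LipschitzOnWith.diag (fun r _ => (h1 r).lipschitzOnWith) (fun x _ => (h2 x).lipschitzOnWith)

lemma LipschitzOnWith.comp_projIcc {α : Type*} [PseudoEMetricSpace α] {f : ℝ → α} {K : ℝ≥0}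
    {a b : ℝ} (h : a ≤ b) (hf : LipschitzOnWith K f (Icc a b)) :
    LipschitzWith K fun x => f (projIcc a b h x) := by
  simpa using! (lipschitzOnWith_iff_restrict.1 hf).comp (LipschitzWith.projIcc h)

lemma LipschitzWith.abs_sub_div_le {f : ℝ → ℝ} {K : ℝ≥0} (hf : LipschitzWith K f) (x : ℝ)
    {u : ℝ} (hu : 0 < u) : |(f (x + u) - f x) / u| ≤ K := by
  rw [abs_div, abs_of_pos hu, div_le_iff₀ hu]
  simpa [Real.dist_eq, abs_of_pos hu] using hf.dist_le_mul (x + u) x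

lemma LipschitzWith.abs_integral_sub_mul_le {f : ℝ → ℝ} {K : ℝ≥0} (hf : LipschitzWith K f)
    (a : ℝ) {u : ℝ} (hu : 0 ≤ u) : |(∫ τ in a..a + u, f τ) - u * f a| ≤ K * u * u := by
  have hint : IntervalIntegrable f volume a (a + u) := hf.continuous.intervalIntegrable _ _
  have := intervalIntegral.norm_integral_le_of_norm_le_const (a := a) (b := a + u)
    (f := fun τ => f τ - f a) (C := K * u) fun τ hτ => by
      rw [uIoc_of_le (by linarith)] at hτ
      have := hf.dist_le_mul τ a
      rw [Real.dist_eq, Real.dist_eq, abs_of_nonneg (a := τ - a) (by linarith [hτ.1])] at this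
      rw [Real.norm_eq_abs]
      exact this.trans (by gcongr; linarith [hτ.2])
  rwa [intervalIntegral.integral_sub hint intervalIntegrable_const, intervalIntegral.integral_const,
    add_sub_cancel_left, smul_eq_mul, abs_of_nonneg hu, Real.norm_eq_abs] at this

lemma intervalIntegral.integral_comp_add_right_sub {f : ℝ → ℝ} (hf : Continuous f) (x y u : ℝ) :
    ∫ τ in x..y, (f (τ + u) - f τ) = (∫ τ in y..y + u, f τ) - ∫ τ in x..x + u, f τ := by
  have hshift : IntervalIntegrable (fun τ => f (τ + u)) volume x y :=
    (hf.comp (continuous_add_const u)).intervalIntegrable _ _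
  rw [intervalIntegral.integral_sub hshift (hf.intervalIntegrable _ _),
    intervalIntegral.integral_comp_add_right f u,
    intervalIntegral.integral_interval_sub_interval_comm' (hf.intervalIntegrable _ _)
      (hf.intervalIntegrable _ _) (hf.intervalIntegrable _ _)]

lemma ae_le_of_sub_le_integral {f φ : ℝ → ℝ} (hφ : LocallyIntegrable φ)
    (hf : ∀ x y, x ≤ y → f y - f x ≤ ∫ τ in x..y, φ τ) :
    ∀ᵐ x, ∀ f', HasDerivAt f f' x → f' ≤ φ x := by
  have hint (a b : ℝ) : IntervalIntegrable φ volume a b :=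
    intervalIntegrable_iff.2 <|
      (LocallyIntegrable.integrableOn_isCompact hφ isCompact_uIcc).mono_set uIoc_subset_uIcc
  filter_upwards [LocallyIntegrable.ae_hasDerivAt_integral hφ] with x hx f' hf'
  have hmono : Monotone fun y => (∫ τ in 0..y, φ τ) - f y := fun a b hab => by
    have := intervalIntegral.integral_interval_sub_left (hint 0 b) (hint 0 a)
    linarith [hf a b hab]
  linarith [((hx 0).sub hf').nonneg_of_monotone hmono]

lemma eventually_add_sub_mem_Icc_nhdsGT {a b s : ℝ} (hs : s ∈ Ioo a b) :
    ∀ᶠ u in 𝓝[>] 0, s + u ∈ Icc a b ∧ s - u ∈ Icc a b := by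
  filter_upwards [Ioo_mem_nhdsGT (lt_min (sub_pos.2 hs.1) (sub_pos.2 hs.2))] with u hu
  have := min_le_left (s - a) (b - s)
  have := min_le_right (s - a) (b - s)
  exact ⟨⟨by linarith [hu.1, hs.1], by linarith [hu.2]⟩,
    ⟨by linarith [hu.2], by linarith [hu.1, hs.2]⟩⟩

lemma tendsto_one_div_add_one_nhdsGT : Tendsto (fun n : ℕ => 1 / ((n : ℝ) + 1)) atTop (𝓝[>] 0) :=
  tendsto_nhdsWithin_of_tendsto_nhds_of_eventually_within _ tendsto_one_div_add_atTop_nhds_zero_nat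
    (Eventually.of_forall fun _ => mem_Ioi.2 Nat.one_div_pos_of_nat)

noncomputable def splitDiffQuot (H : ℝ → ℝ → ℝ) (u τ : ℝ) : ℝ :=
  (H τ (τ + u) - H τ τ) / u + (H τ τ - H (τ - u) τ) / u

/-- Taking the `limsup` along `1 / (n + 1)` instead of along `𝓝[>] 0` keeps it measurable. -/
noncomputable def splitUpperDeriv (H : ℝ → ℝ → ℝ) (τ : ℝ) : ℝ :=
  limsup (fun n : ℕ => splitDiffQuot H (1 / (n + 1)) τ) atTop

section

variable {H : ℝ → ℝ → ℝ} {L₁ L₂ : ℝ≥0}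

lemma abs_fwdDiffQuot_le (h1 : ∀ r, LipschitzWith L₁ (H r)) {u : ℝ} (hu : 0 < u) (τ : ℝ) :
    |(H τ (τ + u) - H τ τ) / u| ≤ L₁ :=
  (h1 τ).abs_sub_div_le τ hu

lemma abs_bwdDiffQuot_le (h2 : ∀ s, LipschitzWith L₂ fun r => H r s) {u : ℝ} (hu : 0 < u) (τ : ℝ) :
    |(H τ τ - H (τ - u) τ) / u| ≤ L₂ := by
  simpa using (h2 τ).abs_sub_div_le (τ - u) hu

lemma abs_splitDiffQuot_le (h1 : ∀ r, LipschitzWith L₁ (H r))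
    (h2 : ∀ s, LipschitzWith L₂ fun r => H r s) {u : ℝ} (hu : 0 < u) (τ : ℝ) :
    |splitDiffQuot H u τ| ≤ L₁ + L₂ :=
  (abs_add_le _ _).trans (add_le_add (abs_fwdDiffQuot_le h1 hu τ) (abs_bwdDiffQuot_le h2 hu τ))

lemma continuous_splitDiffQuot (hH : Continuous (Function.uncurry H)) (u : ℝ) :
    Continuous (splitDiffQuot H u) := by
  have hcomp {f g : ℝ → ℝ} (hf : Continuous f) (hg : Continuous g) :
      Continuous fun τ => H (f τ) (g τ) :=
    hH.comp (hf.prodMk hg)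
  unfold splitDiffQuot
  have hdiag := hcomp continuous_id continuous_id
  exact (((hcomp continuous_id (continuous_add_const u)).sub hdiag).div_const u).add
    ((hdiag.sub (hcomp (continuous_sub_right u) continuous_id)).div_const u)

lemma sub_le_integral_splitDiffQuot (h1 : ∀ r, LipschitzWith L₁ (H r))
    (h2 : ∀ s, LipschitzWith L₂ fun r => H r s) (x y : ℝ) {u : ℝ} (hu : 0 < u) :
    H y y - H x x - 2 * (L₁ + 2 * L₂) * u ≤ ∫ τ in x..y, splitDiffQuot H u τ := by
  set g : ℝ → ℝ := fun τ => H τ τ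
  set B : ℝ → ℝ := fun τ => (H τ τ - H (τ - u) τ) / u
  have hg : LipschitzWith (L₁ + L₂) g := LipschitzWith.diag h1 h2
  have hB : Continuous B := by
    have hH := (LipschitzWith.uncurry h2 h1).continuous
    exact ((hH.comp (continuous_id.prodMk continuous_id)).sub
      (hH.comp ((continuous_sub_right u).prodMk continuous_id))).div_const u
  -- the forward quotient at `τ` plus the backward one at `τ + u` is the increment of the diagonal
  have hsplit (τ : ℝ) : splitDiffQuot H u τ = (g (τ + u) - g τ) / u - (B (τ + u) - B τ) := by
    simp only [splitDiffQuot, g, B, add_sub_cancel_right]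
    ring
  have hgx := hg.abs_integral_sub_mul_le x hu.le
  have hgy := hg.abs_integral_sub_mul_le y hu.le
  have hB_int (a : ℝ) : |∫ τ in a..a + u, B τ| ≤ L₂ * u := by
    simpa [abs_of_pos hu] using intervalIntegral.norm_integral_le_of_norm_le_const (a := a)
      (b := a + u) (f := B) fun τ _ => abs_bwdDiffQuot_le h2 hu τ
  have hdiag : g y - g x - 2 * (L₁ + L₂) * u ≤
      ((∫ τ in y..y + u, g τ) - ∫ τ in x..x + u, g τ) / u := by
    rw [le_div_iff₀ hu]
    push_cast at hgx hgy
    linarith [(abs_le.1 hgx).2, (abs_le.1 hgy).1]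
  rw [intervalIntegral.integral_congr fun τ _ => hsplit τ, intervalIntegral.integral_sub,
    intervalIntegral.integral_div, intervalIntegral.integral_comp_add_right_sub hg.continuous,
    intervalIntegral.integral_comp_add_right_sub hB]
  · linarith [(abs_le.1 (hB_int x)).1, (abs_le.1 (hB_int y)).2]
  · exact (((hg.continuous.comp (continuous_add_const u)).sub hg.continuous).div_const
      u).intervalIntegrable _ _
  · exact ((hB.comp (continuous_add_const u)).sub hB).intervalIntegrable _ _

lemma abs_splitUpperDeriv_le (h1 : ∀ r, LipschitzWith L₁ (H r))
    (h2 : ∀ s, LipschitzWith L₂ fun r => H r s) (τ : ℝ) : |splitUpperDeriv H τ| ≤ L₁ + L₂ :=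
  abs_limsup_le_of_eventually_abs_le <| Eventually.of_forall fun _ =>
    abs_splitDiffQuot_le h1 h2 Nat.one_div_pos_of_nat τ

lemma measurable_splitUpperDeriv (hH : Continuous (Function.uncurry H)) :
    Measurable (splitUpperDeriv H) :=
  Measurable.limsup fun _ => (continuous_splitDiffQuot hH _).measurable

lemma sub_le_integral_splitUpperDeriv (h1 : ∀ r, LipschitzWith L₁ (H r))
    (h2 : ∀ s, LipschitzWith L₂ fun r => H r s) {x y : ℝ} (hxy : x ≤ y) :
    H y y - H x x ≤ ∫ τ in x..y, splitUpperDeriv H τ := by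
  set u : ℕ → ℝ := fun n => 1 / ((n : ℝ) + 1)
  have hu : Tendsto u atTop (𝓝 0) := tendsto_one_div_add_atTop_nhds_zero_nat
  have hlower : Tendsto (fun n => H y y - H x x - 2 * (L₁ + 2 * L₂) * u n) atTop
      (𝓝 (H y y - H x x)) := by
    simpa using tendsto_const_nhds.sub (hu.const_mul (2 * ((L₁ : ℝ) + 2 * L₂)))
  rw [intervalIntegral.integral_of_le hxy]
  calc H y y - H x x
      = limsup (fun n => H y y - H x x - 2 * (L₁ + 2 * L₂) * u n) atTop := hlower.limsup_eq.symm
    _ ≤ limsup (fun n => ∫ τ in Ioc x y, splitDiffQuot H (u n) τ) atTop := by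
      refine limsup_le_limsup (Eventually.of_forall fun n => ?_)
        hlower.isBoundedUnder_ge.isCoboundedUnder_flip ?_
      · dsimp only
        rw [← intervalIntegral.integral_of_le hxy]
        exact sub_le_integral_splitDiffQuot h1 h2 x y Nat.one_div_pos_of_nat
      · exact isBoundedUnder_of_eventually_le <| Eventually.of_forall fun n =>
          (Real.le_norm_self _).trans <| norm_integral_le_of_norm_le_const <|
            ae_of_all _ fun τ => abs_splitDiffQuot_le h1 h2 Nat.one_div_pos_of_nat τ
    _ ≤ ∫ τ in Ioc x y, splitUpperDeriv H τ :=
      limsup_integral_le_integral_limsup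
        (fun n => (continuous_splitDiffQuot (LipschitzWith.uncurry h2 h1).continuous _).measurable)
        (fun n => abs_splitDiffQuot_le h1 h2 Nat.one_div_pos_of_nat)

lemma splitUpperDeriv_le (h1 : ∀ r, LipschitzWith L₁ (H r))
    (h2 : ∀ s, LipschitzWith L₂ fun r => H r s) (τ : ℝ) :
    splitUpperDeriv H τ ≤ limsup (fun u => (H τ (τ + u) - H τ τ) / u) (𝓝[>] 0) +
      limsup (fun u => (H τ τ - H (τ - u) τ) / u) (𝓝[>] 0) := by
  set A : ℝ → ℝ := fun u => (H τ (τ + u) - H τ τ) / u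
  set B : ℝ → ℝ := fun u => (H τ τ - H (τ - u) τ) / u
  have hA : ∀ᶠ u in 𝓝[>] 0, |A u| ≤ L₁ :=
    eventually_nhdsWithin_of_forall fun u hu => abs_fwdDiffQuot_le h1 hu τ
  have hB : ∀ᶠ u in 𝓝[>] 0, |B u| ≤ L₂ :=
    eventually_nhdsWithin_of_forall fun u hu => abs_bwdDiffQuot_le h2 hu τ
  have hAB : ∀ᶠ u in 𝓝[>] 0, (A + B) u ≤ L₁ + L₂ :=
    eventually_nhdsWithin_of_forall fun u hu => (abs_le.1 (abs_splitDiffQuot_le h1 h2 hu τ)).2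
  have hseq : ∀ᶠ n in map (fun n : ℕ => 1 / ((n : ℝ) + 1)) atTop, -(L₁ + L₂ : ℝ) ≤ (A + B) n :=
    eventually_map.2 <| Eventually.of_forall fun n =>
      (abs_le.1 (abs_splitDiffQuot_le h1 h2 Nat.one_div_pos_of_nat τ)).1
  replace hA := isBoundedUnder_le_abs.1 (isBoundedUnder_of_eventually_le hA)
  replace hB := isBoundedUnder_le_abs.1 (isBoundedUnder_of_eventually_le hB)
  calc splitUpperDeriv H τ = limsup ((A + B) ∘ fun n : ℕ => 1 / ((n : ℝ) + 1)) atTop := rfl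
    _ ≤ limsup (A + B) (𝓝[>] 0) := tendsto_one_div_add_one_nhdsGT.limsup_comp_le_limsup
          (isBoundedUnder_of_eventually_ge hseq).isCoboundedUnder_flip
          (isBoundedUnder_of_eventually_le hAB)
    _ ≤ limsup A (𝓝[>] 0) + limsup B (𝓝[>] 0) :=
      limsup_add_le hA.2 hA.1 hB.2.isCoboundedUnder_flip hB.1

theorem ae_deriv_diag_le (h1 : ∀ r, LipschitzWith L₁ (H r))
    (h2 : ∀ s, LipschitzWith L₂ fun r => H r s) :
    ∀ᵐ s, deriv (fun u => H u u) s ≤ limsup (fun u => (H s (s + u) - H s s) / u) (𝓝[>] 0) +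
      limsup (fun u => (H s s - H (s - u) s) / u) (𝓝[>] 0) := by
  have hΦ : LocallyIntegrable (splitUpperDeriv H) := locallyIntegrable_iff.2 fun k hk =>
    .of_bound hk.measure_lt_top
      (measurable_splitUpperDeriv (LipschitzWith.uncurry h2 h1).continuous).aestronglyMeasurable
      _ (ae_of_all _ (abs_splitUpperDeriv_le h1 h2))
  filter_upwards [(LipschitzWith.diag h1 h2).ae_differentiableAt,
    ae_le_of_sub_le_integral hΦ fun x y hxy => sub_le_integral_splitUpperDeriv h1 h2 hxy]
    with s hs hle
  exact (hle _ hs.hasDerivAt).trans (splitUpperDeriv_le h1 h2 s)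

end

theorem stmt_10 (t : ℝ) (ht : 0 < t) (G : ℝ → ℝ → ℝ) (L₁ L₂ : NNReal)
    (h1 : ∀ r ∈ Set.Icc (0:ℝ) t, LipschitzOnWith L₁ (fun s => G r s) (Set.Icc (0:ℝ) t))
    (h2 : ∀ s ∈ Set.Icc (0:ℝ) t, LipschitzOnWith L₂ (fun r => G r s) (Set.Icc (0:ℝ) t)) :
    (∃ L : NNReal, LipschitzOnWith L (fun s => G s s) (Set.Icc (0:ℝ) t)) ∧
    ∀ᵐ s ∂(volume.restrict (Set.Ioo (0:ℝ) t)),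
      deriv (fun u => G u u) s ≤
        limsup (fun u : ℝ => (G s (s + u) - G s s) / u) (nhdsWithin 0 (Set.Ioi 0)) +
        limsup (fun u : ℝ => (G s s - G (s - u) s) / u) (nhdsWithin 0 (Set.Ioi 0)) := by
  set H : ℝ → ℝ → ℝ := fun r s => G (projIcc 0 t ht.le r) (projIcc 0 t ht.le s)
  have hH1 (r : ℝ) : LipschitzWith L₁ (H r) := (h1 _ (projIcc 0 t ht.le r).2).comp_projIcc ht.le
  have hH2 (s : ℝ) : LipschitzWith L₂ fun r => H r s :=
    (h2 _ (projIcc 0 t ht.le s).2).comp_projIcc ht.le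
  have hHG {r s : ℝ} (hr : r ∈ Icc 0 t) (hs : s ∈ Icc 0 t) : H r s = G r s := by
    simp [H, projIcc_of_mem _ hr, projIcc_of_mem _ hs]
  refine ⟨⟨L₁ + L₂, LipschitzOnWith.diag h1 h2⟩, ?_⟩
  filter_upwards [ae_restrict_of_ae (ae_deriv_diag_le hH1 hH2), ae_restrict_mem measurableSet_Ioo]
    with s hs hst
  have hsI : s ∈ Icc 0 t := Ioo_subset_Icc_self hst
  have hnear := eventually_add_sub_mem_Icc_nhdsGT hst
  have hderiv : deriv (fun u => G u u) s = deriv (fun u => H u u) s :=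
    Filter.EventuallyEq.deriv_eq <| by
      filter_upwards [isOpen_Ioo.mem_nhds hst] with u hu
      exact (hHG (Ioo_subset_Icc_self hu) (Ioo_subset_Icc_self hu)).symm
  have hA : (fun u => (G s (s + u) - G s s) / u) =ᶠ[𝓝[>] 0] fun u => (H s (s + u) - H s s) / u :=
    hnear.mono fun u hu => by simp only [hHG hsI hu.1, hHG hsI hsI]
  have hB : (fun u => (G s s - G (s - u) s) / u) =ᶠ[𝓝[>] 0] fun u => (H s s - H (s - u) s) / u :=
    hnear.mono fun u hu => by simp only [hHG hu.2 hsI, hHG hsI hsI]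
  rwa [hderiv, limsup_congr hA, limsup_congr hB]
end
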